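/- Let p ≥ 2 be real, let 0 < m < M, and define β_p(t) = ((M−t)(t−m)/(M−m))·((M−t)^{p−1} + (t−m)^{p−1}). Let H be a complex Hilbert space and let A, D be positive bounded operators on H satisfying A ≤ m·I ≤ (A+D)/2 ≤ M·I ≤ D. Then ((A+D)/2)^p + β_p((A+D)/2) ≤ (A^p + D^p)/2 − ((m·I − A)^p + (D − M·I)^p)/2, where all operator powers and β_p of an operator are formed via continuous functional calculus. -/

import Mathlib

/-!
For `p ≥ 2`, `t ↦ t ^ p` is superquadratic: it lies above its tangent line at `x ≥ 0` by at least
`|y - x| ^ p`, because the gap is monotone in `|y - x|`, its derivative being `p` times a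
superadditivity defect of `t ↦ t ^ (p - 1)`. For a nonnegative superquadratic `f`, using this at
the endpoints of `[m, M]` gives three scalar inequalities for the chord `L` of `f` over `[m, M]`:
`f + β_f ≤ L` on `[m, M]`, `L t ≤ f t - f (m - t)` on `[0, m]` and `L t ≤ f t - f (t - M)` on
`[M, ∞)`. Monotonicity of the functional calculus transfers them to `(A + D) / 2`, `A` and `D`,
and since `L` is affine, `L ((A + D) / 2)` is the average of `L A` and `L D`.
-/

open Set

namespace Real

variable {p : ℝ}

lemma rpow_add_mul_add_rpow_le_add_rpow (hp : 2 ≤ p) {x s : ℝ} (hx : 0 ≤ x) (hs : 0 ≤ s) :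
    x ^ p + p * x ^ (p - 1) * s + s ^ p ≤ (x + s) ^ p := by
  have hp1 : 1 ≤ p := by linarith
  let φ : ℝ → ℝ := fun u => (x + u) ^ p - u ^ p - p * x ^ (p - 1) * u
  have hφ' (u : ℝ) :
      HasDerivAt φ (1 * p * (x + u) ^ (p - 1) - p * u ^ (p - 1) - p * x ^ (p - 1) * 1) u :=
    ((((hasDerivAt_id u).const_add x).rpow_const (Or.inr hp1)).sub
      (hasDerivAt_rpow_const (Or.inr hp1))).sub ((hasDerivAt_id u).const_mul _)
  have hmono : MonotoneOn φ (Ici 0) := by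
    refine monotoneOn_of_hasDerivWithinAt_nonneg (convex_Ici 0)
      (fun u _ => (hφ' u).continuousAt.continuousWithinAt)
      (fun u _ => (hφ' u).hasDerivWithinAt) ?_
    intro u hu
    rw [interior_Ici] at hu
    have := add_rpow_le_rpow_add hx hu.le (by linarith : 1 ≤ p - 1)
    nlinarith
  have := hmono self_mem_Ici hs hs
  simp only [φ, add_zero, zero_rpow (by linarith : p ≠ 0)] at this
  linarith

lemma rpow_sub_mul_add_rpow_le_sub_rpow (hp : 2 ≤ p) {x s : ℝ} (hs : 0 ≤ s) (hsx : s ≤ x) :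
    x ^ p - p * x ^ (p - 1) * s + s ^ p ≤ (x - s) ^ p := by
  have hp1 : 1 ≤ p := by linarith
  let ψ : ℝ → ℝ := fun u => (x - u) ^ p - u ^ p + p * x ^ (p - 1) * u
  have hψ' (u : ℝ) :
      HasDerivAt ψ (-1 * p * (x - u) ^ (p - 1) - p * u ^ (p - 1) + p * x ^ (p - 1) * 1) u :=
    ((((hasDerivAt_id u).const_sub x).rpow_const (Or.inr hp1)).sub
      (hasDerivAt_rpow_const (Or.inr hp1))).add ((hasDerivAt_id u).const_mul _)
  have hmono : MonotoneOn ψ (Icc 0 x) := by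
    refine monotoneOn_of_hasDerivWithinAt_nonneg (convex_Icc 0 x)
      (fun u _ => (hψ' u).continuousAt.continuousWithinAt)
      (fun u _ => (hψ' u).hasDerivWithinAt) ?_
    intro u hu
    rw [interior_Icc] at hu
    have := add_rpow_le_rpow_add (sub_nonneg.2 hu.2.le) hu.1.le (by linarith : 1 ≤ p - 1)
    rw [sub_add_cancel] at this
    nlinarith
  have := hmono (left_mem_Icc.2 (hs.trans hsx)) ⟨hs, hsx⟩ hs
  simp only [ψ, sub_zero, mul_zero, add_zero, zero_rpow (by linarith : p ≠ 0)] at this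
  linarith

end Real

/-- Superquadraticity on `[0, ∞)` in the sense of Abramovich–Jameson–Sinnamon; `C` plays the role
of `f'`. -/
def Superquadratic (f C : ℝ → ℝ) : Prop :=
  ∀ ⦃x y : ℝ⦄, 0 ≤ x → 0 ≤ y → f x + C x * (y - x) + f |y - x| ≤ f y

lemma Real.superquadratic_rpow {p : ℝ} (hp : 2 ≤ p) :
    Superquadratic (fun t => t ^ p) (fun x => p * x ^ (p - 1)) := by
  intro x y hx hy
  dsimp only
  rcases le_total x y with hxy | hyx
  · rw [abs_of_nonneg (sub_nonneg.2 hxy)]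
    simpa only [add_sub_cancel] using
      Real.rpow_add_mul_add_rpow_le_add_rpow hp hx (sub_nonneg.2 hxy)
  · have := Real.rpow_sub_mul_add_rpow_le_sub_rpow hp (sub_nonneg.2 hyx) (sub_le_self x hy)
    rw [sub_sub_cancel] at this
    rw [abs_sub_comm, abs_of_nonneg (sub_nonneg.2 hyx)]
    linarith

/-- The paper's `β_f`. -/
noncomputable def superquadraticBeta (f : ℝ → ℝ) (m M t : ℝ) : ℝ :=
  ((M - t) * f (t - m) + (t - m) * f (M - t)) / (M - m)

lemma superquadraticBeta_rpow {p : ℝ} (hp : p ≠ 0) {m M t : ℝ} (hmt : m ≤ t) (htM : t ≤ M) :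
    superquadraticBeta (fun t => t ^ p) m M t =
      (M - t) * (t - m) / (M - m) * ((M - t) ^ (p - 1) + (t - m) ^ (p - 1)) := by
  have hsplit {x : ℝ} (hx : 0 ≤ x) : x ^ p = x * x ^ (p - 1) := by
    conv_lhs => rw [show p = 1 + (p - 1) by ring]
    exact Real.rpow_one_add' hx (by simpa using hp)
  rw [superquadraticBeta, hsplit (sub_nonneg.2 hmt), hsplit (sub_nonneg.2 htM)]
  ring

namespace Superquadratic

variable {f C : ℝ → ℝ} {m M : ℝ}

lemma le_slope (hf : Superquadratic f C) (hm : 0 ≤ m) (hmM : m < M)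
    (hf0 : 0 ≤ f (M - m)) : C m ≤ slope f m M := by
  have h := hf hm (hm.trans hmM.le)
  rw [abs_of_pos (sub_pos.2 hmM)] at h
  rw [slope_def_field, le_div_iff₀ (sub_pos.2 hmM)]
  linarith

lemma slope_le (hf : Superquadratic f C) (hm : 0 ≤ m) (hmM : m < M)
    (hf0 : 0 ≤ f (M - m)) : slope f m M ≤ C M := by
  have h := hf (hm.trans hmM.le) hm
  rw [abs_sub_comm, abs_of_pos (sub_pos.2 hmM)] at h
  rw [slope_def_field, div_le_iff₀ (sub_pos.2 hmM)]
  linarith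

lemma add_superquadraticBeta_le_chord (hf : Superquadratic f C) (hm : 0 ≤ m) (hmM : m < M)
    {t : ℝ} (hmt : m ≤ t) (htM : t ≤ M) :
    f t + superquadraticBeta f m M t ≤ f m + slope f m M * (t - m) := by
  have ht : 0 ≤ t := hm.trans hmt
  have hMm : 0 < M - m := sub_pos.2 hmM
  have hleft := mul_le_mul_of_nonneg_left (hf ht hm) (sub_nonneg.2 htM)
  have hright := mul_le_mul_of_nonneg_left (hf ht (ht.trans htM)) (sub_nonneg.2 hmt)
  rw [abs_sub_comm, abs_of_nonneg (sub_nonneg.2 hmt)] at hleft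
  rw [abs_of_nonneg (sub_nonneg.2 htM)] at hright
  have hslope : (M - m) * slope f m M = f M - f m := sub_smul_slope f m M
  rw [superquadraticBeta, ← le_sub_iff_add_le', div_le_iff₀ hMm]
  linear_combination hleft + hright - (t - m) * hslope

lemma chord_le_sub_of_le_left (hf : Superquadratic f C) (hm : 0 ≤ m) (hmM : m < M)
    (hf0 : 0 ≤ f (M - m)) {t : ℝ} (ht : 0 ≤ t) (htm : t ≤ m) :
    f m + slope f m M * (t - m) ≤ f t - f (m - t) := by
  have h := hf hm ht
  rw [abs_sub_comm, abs_of_nonneg (sub_nonneg.2 htm)] at h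
  have := mul_le_mul_of_nonpos_right (hf.le_slope hm hmM hf0) (sub_nonpos.2 htm)
  linarith

lemma chord_le_sub_of_right_le (hf : Superquadratic f C) (hm : 0 ≤ m) (hmM : m < M)
    (hf0 : 0 ≤ f (M - m)) {t : ℝ} (hMt : M ≤ t) :
    f m + slope f m M * (t - m) ≤ f t - f (t - M) := by
  have h := hf (hm.trans hmM.le) (hm.trans (hmM.le.trans hMt))
  rw [abs_of_nonneg (sub_nonneg.2 hMt)] at h
  have := mul_le_mul_of_nonneg_right (hf.slope_le hm hmM hf0) (sub_nonneg.2 hMt)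
  have hslope : (M - m) * slope f m M = f M - f m := sub_smul_slope f m M
  linear_combination h + this + hslope

end Superquadratic

section ContinuousFunctionalCalculus

variable {A : Type*} [Ring A] [StarRing A] [TopologicalSpace A] [Algebra ℝ A]
  [ContinuousFunctionalCalculus ℝ A IsSelfAdjoint] [ContinuousMap.UniqueHom ℝ A]

lemma cfc_algebraMap_sub {f : ℝ → ℝ} (hf : Continuous f) (r : ℝ) {a : A} (ha : IsSelfAdjoint a) :
    cfc f (algebraMap ℝ A r - a) = cfc (fun t => f (r - t)) a := by
  rw [cfc_comp' f (fun t => r - t) a, cfc_sub (fun _ => r) (fun t => t) a, cfc_const r a,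
    cfc_id' ℝ a]

lemma cfc_sub_algebraMap {f : ℝ → ℝ} (hf : Continuous f) (r : ℝ) {a : A} (ha : IsSelfAdjoint a) :
    cfc f (a - algebraMap ℝ A r) = cfc (fun t => f (t - r)) a := by
  rw [cfc_comp' f (fun t => t - r) a, cfc_sub (fun t => t) (fun _ => r) a, cfc_const r a,
    cfc_id' ℝ a]

end ContinuousFunctionalCalculus

section CStarAlgebra

variable {𝒜 : Type*} [CStarAlgebra 𝒜] [PartialOrder 𝒜] [StarOrderedRing 𝒜]

lemma spectrum_subset_Icc {a : 𝒜} {r₁ r₂ : ℝ} (h₁ : algebraMap ℝ 𝒜 r₁ ≤ a)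
    (h₂ : a ≤ algebraMap ℝ 𝒜 r₂) : spectrum ℝ a ⊆ Icc r₁ r₂ := by
  have ha : IsSelfAdjoint a := (IsSelfAdjoint.algebraMap 𝒜 (.all r₁)).of_ge h₁
  exact fun t ht => ⟨(algebraMap_le_iff_le_spectrum ha).1 h₁ t ht,
    (le_algebraMap_iff_spectrum_le ha).1 h₂ t ht⟩

lemma cfc_le_smul_add_algebraMap {g : ℝ → ℝ} {a : 𝒜} (s k : ℝ) (ha : IsSelfAdjoint a)
    (hg : ContinuousOn g (spectrum ℝ a)) (h : ∀ t ∈ spectrum ℝ a, g t ≤ s * t + k) :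
    cfc g a ≤ s • a + algebraMap ℝ 𝒜 k := by
  rw [← cfc_const_mul_id s a, ← cfc_add_const k (fun t => s * t) a]
  exact cfc_mono h

lemma smul_add_algebraMap_le_cfc {g : ℝ → ℝ} {a : 𝒜} (s k : ℝ) (ha : IsSelfAdjoint a)
    (hg : ContinuousOn g (spectrum ℝ a)) (h : ∀ t ∈ spectrum ℝ a, s * t + k ≤ g t) :
    s • a + algebraMap ℝ 𝒜 k ≤ cfc g a := by
  rw [← cfc_const_mul_id s a, ← cfc_add_const k (fun t => s * t) a]
  exact cfc_mono h

theorem Superquadratic.cfc_midpoint_add_cfc_superquadraticBeta_le {f C : ℝ → ℝ}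
    (hf : Superquadratic f C) (hfc : Continuous f) {m M : ℝ} (hm : 0 ≤ m) (hmM : m < M)
    (hf0 : 0 ≤ f (M - m)) {a d : 𝒜} (ha : 0 ≤ a) (ham : a ≤ algebraMap ℝ 𝒜 m)
    (hmc : algebraMap ℝ 𝒜 m ≤ (2 : ℝ)⁻¹ • (a + d))
    (hcM : (2 : ℝ)⁻¹ • (a + d) ≤ algebraMap ℝ 𝒜 M)
    (hMd : algebraMap ℝ 𝒜 M ≤ d) :
    cfc f ((2 : ℝ)⁻¹ • (a + d)) + cfc (superquadraticBeta f m M) ((2 : ℝ)⁻¹ • (a + d)) ≤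
      (2 : ℝ)⁻¹ • (cfc f a + cfc f d) -
        (2 : ℝ)⁻¹ • (cfc f (algebraMap ℝ 𝒜 m - a) + cfc f (d - algebraMap ℝ 𝒜 M)) := by
  set c := (2 : ℝ)⁻¹ • (a + d)
  set s := slope f m M
  set k := f m - s * m
  have hchord (t : ℝ) : f m + s * (t - m) = s * t + k := by ring
  have ha_sa : IsSelfAdjoint a := .of_nonneg ha
  have hd_sa : IsSelfAdjoint d := (IsSelfAdjoint.algebraMap 𝒜 (.all M)).of_ge hMd
  have hc_sa : IsSelfAdjoint c := (IsSelfAdjoint.algebraMap 𝒜 (.all m)).of_ge hmc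
  have hβc : Continuous (superquadraticBeta f m M) := by unfold superquadraticBeta; fun_prop
  have hc : cfc f c + cfc (superquadraticBeta f m M) c ≤ s • c + algebraMap ℝ 𝒜 k := by
    rw [← cfc_add (a := c) f (superquadraticBeta f m M)]
    refine cfc_le_smul_add_algebraMap s k hc_sa (by fun_prop) fun t ht => ?_
    obtain ⟨hmt, htM⟩ := spectrum_subset_Icc hmc hcM ht
    rw [← hchord]
    exact hf.add_superquadraticBeta_le_chord hm hmM hmt htM
  have ha' : s • a + algebraMap ℝ 𝒜 k ≤ cfc f a - cfc f (algebraMap ℝ 𝒜 m - a) := by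
    rw [cfc_algebraMap_sub hfc m ha_sa, ← cfc_sub f (fun t => f (m - t)) a]
    refine smul_add_algebraMap_le_cfc s k ha_sa (by fun_prop) fun t ht => ?_
    obtain ⟨h0t, htm⟩ := spectrum_subset_Icc (by rwa [map_zero]) ham ht
    rw [← hchord]
    exact hf.chord_le_sub_of_le_left hm hmM hf0 h0t htm
  have hd' : s • d + algebraMap ℝ 𝒜 k ≤ cfc f d - cfc f (d - algebraMap ℝ 𝒜 M) := by
    rw [cfc_sub_algebraMap hfc M hd_sa, ← cfc_sub f (fun t => f (t - M)) d]
    refine smul_add_algebraMap_le_cfc s k hd_sa (by fun_prop) fun t ht => ?_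
    rw [← hchord]
    exact hf.chord_le_sub_of_right_le hm hmM hf0
      ((algebraMap_le_iff_le_spectrum hd_sa).1 hMd t ht)
  calc cfc f c + cfc (superquadraticBeta f m M) c
      ≤ s • c + algebraMap ℝ 𝒜 k := hc
    _ = (2 : ℝ)⁻¹ • ((s • a + algebraMap ℝ 𝒜 k) + (s • d + algebraMap ℝ 𝒜 k)) := by module
    _ ≤ (2 : ℝ)⁻¹ • ((cfc f a - cfc f (algebraMap ℝ 𝒜 m - a)) +
          (cfc f d - cfc f (d - algebraMap ℝ 𝒜 M))) := by gcongr
    _ = _ := by module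

end CStarAlgebra

theorem jensen_operator_rpow_general
    {H : Type*} [NormedAddCommGroup H] [InnerProductSpace ℂ H] [CompleteSpace H]
    (p : ℝ) (hp : 2 ≤ p)
    (m M : ℝ) (hm : 0 < m) (hmM : m < M)
    (βp : ℝ → ℝ)
    (hβp : ∀ t : ℝ,
      βp t = (M - t) * (t - m) / (M - m) * ((M - t) ^ (p - 1) + (t - m) ^ (p - 1)))
    (A D : H →L[ℂ] H) (hA : 0 ≤ A)
    (hAmI : A ≤ m • 1) (hmid1 : m • (1 : H →L[ℂ] H) ≤ (2 : ℝ)⁻¹ • (A + D))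
    (hmid2 : (2 : ℝ)⁻¹ • (A + D) ≤ M • (1 : H →L[ℂ] H)) (hMID : M • (1 : H →L[ℂ] H) ≤ D) :
    cfc (fun t : ℝ => t ^ p) ((2 : ℝ)⁻¹ • (A + D)) + cfc βp ((2 : ℝ)⁻¹ • (A + D)) ≤
      (2 : ℝ)⁻¹ • (cfc (fun t : ℝ => t ^ p) A + cfc (fun t : ℝ => t ^ p) D) -
        (2 : ℝ)⁻¹ • (cfc (fun t : ℝ => t ^ p) (m • 1 - A) +
          cfc (fun t : ℝ => t ^ p) (D - M • 1)) := by
  simp only [← Algebra.algebraMap_eq_smul_one] at hAmI hmid1 hmid2 hMID ⊢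
  have hβ : cfc βp ((2 : ℝ)⁻¹ • (A + D)) =
      cfc (superquadraticBeta (fun t => t ^ p) m M) ((2 : ℝ)⁻¹ • (A + D)) :=
    cfc_congr fun t ht => by
      obtain ⟨hmt, htM⟩ := spectrum_subset_Icc hmid1 hmid2 ht
      rw [hβp, superquadraticBeta_rpow (by linarith) hmt htM]
  rw [hβ]
  exact (Real.superquadratic_rpow hp).cfc_midpoint_add_cfc_superquadraticBeta_le
    (Real.continuous_rpow_const (by linarith)) hm.le hmM
    (Real.rpow_nonneg (sub_nonneg.2 hmM.le) p) hA hAmI hmid1 hmid2 hMID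

theorem jensen_operator_rpow
    {H : Type*} [NormedAddCommGroup H] [InnerProductSpace ℂ H] [CompleteSpace H]
    (p : ℝ) (hp : 2 ≤ p)
    (m M : ℝ) (hm : 0 < m) (hmM : m < M)
    (βp : ℝ → ℝ)
    (hβp : ∀ t : ℝ,
      βp t = (M - t) * (t - m) / (M - m) * ((M - t) ^ (p - 1) + (t - m) ^ (p - 1)))
    (A D : H →L[ℂ] H) (hA : 0 ≤ A) (hD : 0 ≤ D)
    (hAmI : A ≤ m • 1) (hmid1 : m • (1 : H →L[ℂ] H) ≤ (2 : ℝ)⁻¹ • (A + D))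
    (hmid2 : (2 : ℝ)⁻¹ • (A + D) ≤ M • (1 : H →L[ℂ] H)) (hMID : M • (1 : H →L[ℂ] H) ≤ D) :
    cfc (fun t : ℝ => t ^ p) ((2 : ℝ)⁻¹ • (A + D)) + cfc βp ((2 : ℝ)⁻¹ • (A + D)) ≤
      (2 : ℝ)⁻¹ • (cfc (fun t : ℝ => t ^ p) A + cfc (fun t : ℝ => t ^ p) D) -
        (2 : ℝ)⁻¹ • (cfc (fun t : ℝ => t ^ p) (m • 1 - A) +
          cfc (fun t : ℝ => t ^ p) (D - M • 1)) :=
  jensen_operator_rpow_general p hp m M hm hmM βp hβp A D hA hAmI hmid1 hmid2 hMID
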